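/- Let M be an n×n matrix over ℚ[t,t⁻¹] all of whose entries are nonzero Laurent polynomials with positive coefficients, and suppose some entry of M has spread at least one. Then every entry of M^3 has spread at least one. -/

import Mathlib

noncomputable def spread (p : LaurentPolynomial ℚ) : ℤ :=
  WithBot.unbotD 0 p.coeff.support.max - WithTop.untopD 0 p.coeff.support.min

def PosCoeffs (p : LaurentPolynomial ℚ) : Prop := ∀ m ∈ p.coeff.support, 0 < p.coeff m

/-!
Coefficients of sums and products of Laurent polynomials with nonnegative coefficients cannot
cancel. Hence, for a matrix `M` with such entries, `x + w + y` is an exponent of `(M ^ 3) i j`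
whenever `x`, `w`, `y` are exponents of `M i a`, `M a b`, `M b j`. Since all entries are nonzero,
two distinct exponents `w` of an entry `M a b` of positive spread give two distinct exponents of
every entry of `M ^ 3`.
-/

namespace AddMonoidAlgebra

variable {R M : Type*} [Semiring R] [PartialOrder R] [IsStrictOrderedRing R] [AddMonoid M]

def nonnegCoeffs : Subsemiring (AddMonoidAlgebra R M) where
  carrier := {p | ∀ m, 0 ≤ p.coeff m}
  zero_mem' _ := le_rfl
  one_mem' m := by
    classical
    rw [one_def, coeff_single, Finsupp.single_apply]
    split_ifs <;> simp
  add_mem' hp hq m := add_nonneg (hp m) (hq m)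
  mul_mem' {p q} hp hq m := by
    classical
    rw [coeff_mul]
    exact Finsupp.sum_nonneg' fun a => Finsupp.sum_nonneg' fun b => by
      split_ifs
      exacts [mul_nonneg (hp a) (hq b), le_rfl]

lemma support_subset_support_sum {ι : Type*} {s : Finset ι} {f : ι → AddMonoidAlgebra R M}
    (hf : ∀ i ∈ s, f i ∈ nonnegCoeffs) {i : ι} (hi : i ∈ s) :
    (f i).coeff.support ⊆ (∑ j ∈ s, f j).coeff.support := by
  intro m hm
  rw [Finsupp.mem_support_iff] at hm ⊢
  have hle : (f i).coeff m ≤ (∑ j ∈ s, f j).coeff m := by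
    rw [coeff_sum, Finsupp.finsetSum_apply]
    exact Finset.single_le_sum (fun j hj => hf j hj m) hi
  exact (((hf i hi m).lt_of_ne' hm).trans_le hle).ne'

lemma add_mem_support_mul {p q : AddMonoidAlgebra R M} (hp : p ∈ nonnegCoeffs)
    (hq : q ∈ nonnegCoeffs) {a b : M} (ha : a ∈ p.coeff.support) (hb : b ∈ q.coeff.support) :
    a + b ∈ (p * q).coeff.support := by
  classical
  have hterm (a' b' : M) : 0 ≤ if a' + b' = a + b then p.coeff a' * q.coeff b' else 0 := by
    split_ifs
    exacts [mul_nonneg (hp a') (hq b'), le_rfl]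
  have hpos : 0 < p.coeff a * q.coeff b :=
    mul_pos ((hp a).lt_of_ne' (Finsupp.mem_support_iff.mp ha))
      ((hq b).lt_of_ne' (Finsupp.mem_support_iff.mp hb))
  have hle : p.coeff a * q.coeff b ≤ (p * q).coeff (a + b) := by
    rw [coeff_mul]
    calc p.coeff a * q.coeff b = if a + b = a + b then p.coeff a * q.coeff b else 0 :=
          (if_pos rfl).symm
      _ ≤ q.coeff.sum fun b' s => if a + b' = a + b then p.coeff a * s else 0 :=
          Finset.single_le_sum (fun b' _ => hterm a b') hb
      _ ≤ _ := Finset.single_le_sum (f := fun a' => q.coeff.sum fun b' s =>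
            if a' + b' = a + b then p.coeff a' * s else 0)
          (fun a' _ => Finsupp.sum_nonneg' fun b' => hterm a' b') ha
  exact Finsupp.mem_support_iff.mpr (hpos.trans_le hle).ne'

lemma add_mem_support_matrix_mul_apply {l m o : Type*} [Fintype m]
    {A : Matrix l m (AddMonoidAlgebra R M)} {B : Matrix m o (AddMonoidAlgebra R M)}
    (hA : ∀ i k, A i k ∈ nonnegCoeffs) (hB : ∀ k j, B k j ∈ nonnegCoeffs) {i : l} {k : m} {j : o}
    {a b : M} (ha : a ∈ (A i k).coeff.support) (hb : b ∈ (B k j).coeff.support) :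
    a + b ∈ ((A * B) i j).coeff.support :=
  support_subset_support_sum (fun k' _ => mul_mem (hA i k') (hB k' j)) (Finset.mem_univ k)
    (add_mem_support_mul (hA i k) (hB k j) ha hb)

end AddMonoidAlgebra

variable {p : LaurentPolynomial ℚ}

lemma PosCoeffs.mem_nonnegCoeffs (hp : PosCoeffs p) : p ∈ AddMonoidAlgebra.nonnegCoeffs := by
  intro m
  by_cases hm : m ∈ p.coeff.support
  · exact (hp m hm).le
  · rw [Finsupp.notMem_support_iff.mp hm]

lemma spread_eq_max'_sub_min' (hne : p.coeff.support.Nonempty) :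
    spread p = p.coeff.support.max' hne - p.coeff.support.min' hne := by
  rw [spread, ← Finset.coe_max' hne, ← Finset.coe_min' hne, WithBot.unbotD_coe,
    WithTop.untopD_coe]

lemma sub_le_spread {a b : ℤ} (ha : a ∈ p.coeff.support) (hb : b ∈ p.coeff.support) :
    b - a ≤ spread p := by
  rw [spread_eq_max'_sub_min' ⟨a, ha⟩]
  have := Finset.le_max' _ _ hb
  have := Finset.min'_le _ _ ha
  omega

lemma one_le_spread_iff : 1 ≤ spread p ↔ ∃ a ∈ p.coeff.support, ∃ b ∈ p.coeff.support, a < b := by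
  constructor
  · intro h
    rcases p.coeff.support.eq_empty_or_nonempty with hemp | hne
    · simp [spread, hemp] at h
    refine ⟨_, Finset.min'_mem _ hne, _, Finset.max'_mem _ hne, ?_⟩
    rw [spread_eq_max'_sub_min' hne] at h
    omega
  · rintro ⟨a, ha, b, hb, hab⟩
    have := sub_le_spread ha hb
    omega

open AddMonoidAlgebra in
theorem stmt_5 (n : ℕ) (M : Matrix (Fin n) (Fin n) (LaurentPolynomial ℚ))
    (h0 : ∀ i j, M i j ≠ 0) (hpos : ∀ i j, PosCoeffs (M i j))
    (hspread : ∃ i j, 1 ≤ spread (M i j)) :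
    ∀ i j, 1 ≤ spread ((M ^ 3) i j) := by
  obtain ⟨a, b, hab⟩ := hspread
  obtain ⟨u, hu, v, hv, huv⟩ := one_le_spread_iff.mp hab
  have hM : M ∈ nonnegCoeffs.matrix := fun i j => (hpos i j).mem_nonnegCoeffs
  intro i j
  obtain ⟨x, hx⟩ := Finsupp.support_nonempty_iff.mpr (coeff_eq_zero.not.mpr (h0 i a))
  obtain ⟨y, hy⟩ := Finsupp.support_nonempty_iff.mpr (coeff_eq_zero.not.mpr (h0 b j))
  have hpath (w : ℤ) (hw : w ∈ (M a b).coeff.support) :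
      x + w + y ∈ ((M ^ 3) i j).coeff.support := by
    rw [pow_three']
    exact add_mem_support_matrix_mul_apply (mul_mem hM hM) hM
      (add_mem_support_matrix_mul_apply hM hM hx hw) hy
  exact one_le_spread_iff.mpr ⟨_, hpath u hu, _, hpath v hv, by omega⟩
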